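/- For every positive integer α and every natural number J with J ≤ 2α, one has (−1)^{1+J} · (2α+1) · SixJ(α, 1, J) = 1 − J(J+1)/(2α(α+1)). Consequently, for every real μ ≠ 0, the nonplanar one-loop sum with external angular momentum L = 1 satisfies I^NP(1, α, μ) = I^P(α, μ) − (1/(2α(α+1))) · ∑_{J=0}^{2α} J(J+1)(2J+1)/(J(J+1)+μ²). -/
import Mathlib


/-- The Racah 6j-symbol `{α α L; α α J}` via Racah's single-sum formula.
Here `(−1)^{2α} = 1` since `α` is an integer, and the sum runs over
`n` with `max(0, L−J) ≤ n ≤ min(L, 2α−J)` (truncated ℕ-subtraction realizes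
`max(0, L−J)` as `L − J`, and `J + n − L` realizes `J − L + n ≥ 0`). -/
noncomputable def SixJ (α L J : ℕ) : ℝ :=
  (-1 : ℝ) ^ J *
    ∑ n ∈ Finset.Icc (L - J) (min L (2 * α - J)),
      (-1 : ℝ) ^ n * (Nat.choose L n : ℝ) ^ 2 *
        (((Nat.factorial (2 * α - L) : ℝ) * (Nat.factorial (2 * α + J + n + 1) : ℝ) *
            (Nat.factorial (2 * α - J) : ℝ) * (Nat.factorial J : ℝ) ^ 2) /
          ((Nat.factorial (2 * α + L + 1) : ℝ) * (Nat.factorial (2 * α + J + 1) : ℝ) *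
            (Nat.factorial (2 * α - J - n) : ℝ) * (Nat.factorial (J + n - L) : ℝ) ^ 2))

/-- The planar one-loop sum `I^P(α,μ) = ∑_{J=0}^{2α} (2J+1)/(J(J+1)+μ²)`. -/
noncomputable def IP (α : ℕ) (μ : ℝ) : ℝ :=
  ∑ J ∈ Finset.range (2 * α + 1), (2 * (J : ℝ) + 1) / ((J : ℝ) * ((J : ℝ) + 1) + μ ^ 2)

/-- The nonplanar one-loop sum
`I^NP(L,α,μ) = ∑_{J=0}^{2α} (−1)^{L+J} (2J+1)(2α+1)/(J(J+1)+μ²) · SixJ(α,L,J)`. -/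
noncomputable def INP (L α : ℕ) (μ : ℝ) : ℝ :=
  ∑ J ∈ Finset.range (2 * α + 1),
    (-1 : ℝ) ^ (L + J) * ((2 * (J : ℝ) + 1) * (2 * (α : ℝ) + 1)) /
        ((J : ℝ) * ((J : ℝ) + 1) + μ ^ 2) * SixJ α L J

lemma negsgn (J : ℕ) : (-1:ℝ)^(1+J) * (-1:ℝ)^J = -1 := by
  rw [pow_add, pow_one]
  have h : (-1:ℝ)^J * (-1:ℝ)^J = 1 := by
    rw [← pow_add]; exact Even.neg_one_pow ⟨J, rfl⟩
  linear_combination (-1) * h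

lemma factexp (k : ℕ) : (Nat.factorial (k+1) : ℝ) = (k+1) * Nat.factorial k := by
  rw [Nat.factorial_succ]; try (push_cast; ring)

set_option maxHeartbeats 2000000 in
lemma sixj_key (α : ℕ) (hα : 0 < α) (J : ℕ) (hJ : J ≤ 2 * α) :
    (-1 : ℝ) ^ (1 + J) * (2 * (α : ℝ) + 1) * SixJ α 1 J
      = 1 - (J : ℝ) * ((J : ℝ) + 1) / (2 * (α : ℝ) * ((α : ℝ) + 1)) := by
  rw [SixJ]
  rcases Nat.eq_zero_or_pos J with rfl | hJ1
  · -- J = 0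
    obtain ⟨m, hm⟩ : ∃ m, 2*α = m + 2 := ⟨2*α - 2, by omega⟩
    have hα2 : (α:ℝ) = ((m:ℝ)+2)/2 := by
      have : (2:ℝ)*α = (m:ℝ)+2 := by exact_mod_cast hm
      linarith
    rw [show (1:ℕ) - 0 = 1 from rfl, show min 1 (2*α - 0) = 1 from by omega,
      Finset.Icc_self, Finset.sum_singleton]
    simp only [hm]
    rw [mul_mul_mul_comm, negsgn 0, neg_one_mul]
    simp only [show m+2-1 = m+1 from by omega, show m+2+0+1+1 = m+4 from by omega,
      show m+2-0 = m+2 from by omega, show m+2+1+1 = m+4 from by omega,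
      show m+2+0+1 = m+3 from by omega, show m+2-0-1 = m+1 from by omega,
      show 0+1-1 = 0 from by omega, Nat.choose_self, pow_one]
    have f4 : (Nat.factorial (m+4) : ℝ) = ((m:ℝ)+4)*Nat.factorial (m+3) := by
      rw [show m+4 = (m+3)+1 from by omega, factexp]; try (push_cast; ring)
    have f3 : (Nat.factorial (m+3) : ℝ) = ((m:ℝ)+3)*Nat.factorial (m+2) := by
      rw [show m+3 = (m+2)+1 from by omega, factexp]; try (push_cast; ring)
    rw [f4, f3]
    rw [hα2]
    have h1 := Nat.factorial_pos (m+1)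
    have h2 := Nat.factorial_pos (m+2)
    have h3 := Nat.factorial_pos (m+3)
    have e1 : (Nat.factorial (m+1) : ℝ) ≠ 0 := by positivity
    have e2 : (Nat.factorial (m+2) : ℝ) ≠ 0 := by positivity
    field_simp
    ring
  · -- 1 ≤ J
    obtain ⟨j, rfl⟩ : ∃ j, J = j + 1 := ⟨J - 1, by omega⟩
    by_cases hJt : j + 1 = 2*α
    · -- J = 2α
      have hm : 2*α = j + 1 := hJt.symm
      have hα2 : (α:ℝ) = ((j:ℝ)+1)/2 := by
        have : (2:ℝ)*α = (j:ℝ)+1 := by exact_mod_cast hm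
        linarith
      rw [show (1:ℕ) - (j+1) = 0 from by omega, show min 1 (2*α - (j+1)) = 0 from by omega,
        Finset.Icc_self, Finset.sum_singleton]
      rw [mul_mul_mul_comm, negsgn (j+1), neg_one_mul]
      simp only [Nat.add_zero, Nat.sub_zero, hm, show j+1-(j+1) = 0 from by omega,
        show j+1+(j+1)+1 = 2*j+3 from by omega, show j+1+1+1 = j+3 from by omega,
        show j+1-1 = j from by omega, Nat.choose_zero_right, pow_zero]
      have f3 : (Nat.factorial (j+3) : ℝ)
          = ((j:ℝ)+3)*(((j:ℝ)+2)*(((j:ℝ)+1)*Nat.factorial j)) := by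
        rw [show j+3 = (j+2)+1 from by omega, factexp,
          show j+2 = (j+1)+1 from by omega, factexp, factexp]; try (push_cast; ring)
      have f1 : (Nat.factorial (j+1) : ℝ) = ((j:ℝ)+1)*Nat.factorial j := by
        rw [factexp]; try (push_cast; ring)
      rw [f3, f1, hα2]
      have e0 : (Nat.factorial j : ℝ) ≠ 0 := by positivity
      have e1 : (Nat.factorial (2*j+3) : ℝ) ≠ 0 := by positivity
      push_cast
      field_simp
      ring
    · -- 1 ≤ J ≤ 2α - 1
      obtain ⟨t, ht⟩ : ∃ t, 2*α = j + t + 2 := ⟨2*α - j - 2, by omega⟩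
      have hα2 : (α:ℝ) = ((j:ℝ)+(t:ℝ)+2)/2 := by
        have : (2:ℝ)*α = (j:ℝ)+(t:ℝ)+2 := by exact_mod_cast ht
        linarith
      rw [show (1:ℕ) - (j+1) = 0 from by omega, show min 1 (2*α - (j+1)) = 1 from by omega,
        Finset.sum_Icc_succ_top (by omega), Finset.Icc_self, Finset.sum_singleton]
      rw [mul_mul_mul_comm, negsgn (j+1), neg_one_mul]
      simp only [Nat.add_zero, Nat.sub_zero, ht, show j+t+2-1 = j+t+1 from by omega,
        show j+t+2-(j+1) = t+1 from by omega, show t+1-1 = t from by omega,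
        show j+t+2+(j+1)+1 = 2*j+t+4 from by omega, show 2*j+t+4+1 = 2*j+t+5 from by omega,
        show j+t+2+1+1 = j+t+4 from by omega,
        show j+1-1 = j from by omega, show j+1+1-1 = j+1 from by omega,
        Nat.choose_zero_right, Nat.choose_self, pow_zero, pow_one]
      have fB : (Nat.factorial (j+t+4) : ℝ)
          = ((j:ℝ)+(t:ℝ)+4)*(((j:ℝ)+(t:ℝ)+3)*(((j:ℝ)+(t:ℝ)+2)*Nat.factorial (j+t+1))) := by
        rw [show j+t+4 = (j+t+3)+1 from by omega, factexp,
          show j+t+3 = (j+t+2)+1 from by omega, factexp,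
          show j+t+2 = (j+t+1)+1 from by omega, factexp]; try (push_cast; ring)
      have fA : (Nat.factorial (2*j+t+5) : ℝ)
          = (2*(j:ℝ)+(t:ℝ)+5)*Nat.factorial (2*j+t+4) := by
        rw [show 2*j+t+5 = (2*j+t+4)+1 from by omega, factexp]; try (push_cast; ring)
      have fC : (Nat.factorial (t+1) : ℝ) = ((t:ℝ)+1)*Nat.factorial t := by
        rw [factexp]; try (push_cast; ring)
      have fD : (Nat.factorial (j+1) : ℝ) = ((j:ℝ)+1)*Nat.factorial j := by
        rw [factexp]; try (push_cast; ring)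
      rw [fB, fA, fC, fD, hα2]
      have e0 : (Nat.factorial j : ℝ) ≠ 0 := by positivity
      have e1 : (Nat.factorial t : ℝ) ≠ 0 := by positivity
      have e2 : (Nat.factorial (j+t+1) : ℝ) ≠ 0 := by positivity
      have e3 : (Nat.factorial (2*j+t+4) : ℝ) ≠ 0 := by positivity
      push_cast
      field_simp
      ring

/-- For every positive integer `α` and every `J ≤ 2α`,
`(−1)^{1+J} (2α+1) SixJ(α,1,J) = 1 − J(J+1)/(2α(α+1))`; consequently, for every
`μ ≠ 0`, `I^NP(1,α,μ) = I^P(α,μ) − (1/(2α(α+1))) ∑_{J=0}^{2α} J(J+1)(2J+1)/(J(J+1)+μ²)`. -/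
theorem sixj_L_one_and_nonplanar_planar_difference :
    (∀ α : ℕ, 0 < α → ∀ J : ℕ, J ≤ 2 * α →
        (-1 : ℝ) ^ (1 + J) * (2 * (α : ℝ) + 1) * SixJ α 1 J
          = 1 - (J : ℝ) * ((J : ℝ) + 1) / (2 * (α : ℝ) * ((α : ℝ) + 1))) ∧
    (∀ α : ℕ, 0 < α → ∀ μ : ℝ, μ ≠ 0 →
        INP 1 α μ = IP α μ - 1 / (2 * (α : ℝ) * ((α : ℝ) + 1)) *
          ∑ J ∈ Finset.range (2 * α + 1),
            (J : ℝ) * ((J : ℝ) + 1) * (2 * (J : ℝ) + 1) /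
              ((J : ℝ) * ((J : ℝ) + 1) + μ ^ 2)) := by
  refine ⟨sixj_key, ?_⟩
  intro α hα μ hμ
  rw [INP, IP, Finset.mul_sum, ← Finset.sum_sub_distrib]
  refine Finset.sum_congr rfl fun J hJ => ?_
  have hJ' : J ≤ 2 * α := by
    have := Finset.mem_range.mp hJ; omega
  have hk := sixj_key α hα J hJ'
  have hD : (J : ℝ) * ((J : ℝ) + 1) + μ ^ 2 ≠ 0 := by positivity
  have hα0 : (0:ℝ) < (α:ℝ) := by exact_mod_cast hα
  have hA : 2 * (α:ℝ) * ((α:ℝ) + 1) ≠ 0 := by positivity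
  calc (-1 : ℝ) ^ (1 + J) * ((2 * (J : ℝ) + 1) * (2 * (α : ℝ) + 1)) /
        ((J : ℝ) * ((J : ℝ) + 1) + μ ^ 2) * SixJ α 1 J
      = (2 * (J : ℝ) + 1) / ((J : ℝ) * ((J : ℝ) + 1) + μ ^ 2) *
          ((-1 : ℝ) ^ (1 + J) * (2 * (α : ℝ) + 1) * SixJ α 1 J) := by ring
    _ = (2 * (J : ℝ) + 1) / ((J : ℝ) * ((J : ℝ) + 1) + μ ^ 2) *
          (1 - (J : ℝ) * ((J : ℝ) + 1) / (2 * (α : ℝ) * ((α : ℝ) + 1))) := by rw [hk]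
    _ = (2 * (J : ℝ) + 1) / ((J : ℝ) * ((J : ℝ) + 1) + μ ^ 2) -
          1 / (2 * (α : ℝ) * ((α : ℝ) + 1)) *
            ((J : ℝ) * ((J : ℝ) + 1) * (2 * (J : ℝ) + 1) /
              ((J : ℝ) * ((J : ℝ) + 1) + μ ^ 2)) := by
        field_simp
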